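/- arXiv:math/9801103 — 6 statements merged into one kernel-verified Lean document; each statement's English description precedes it below -/
import Mathlib

section
/- Let L be a complete lattice with a commutative, associative operation ∧ distributing over arbitrary joins, with ⊤ ∧ x = x. Let DL = { x | x ∧ x = x }. Then DL is closed under arbitrary joins and under ∧, and in DL the meet of x and y is x ∧ y; consequently DL is a frame (meet distributes over arbitrary joins in DL). -/
/-- The set `DL` of smash-idempotents is closed under arbitrary joins and
under smash; smash is the meet in `DL`, and the meet distributes over
arbitrary joins in `DL` (so `DL` is a frame). -/
theorem stmt_5 {L : Type*} [CompleteLattice L] (sm : L → L → L)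
    (hcomm : ∀ x y, sm x y = sm y x)
    (hassoc : ∀ x y z, sm (sm x y) z = sm x (sm y z))
    (hmono : ∀ x, Monotone (sm x))
    (hunit : ∀ x, sm ⊤ x = x)
    (hdist : ∀ x (s : Set L), sm x (sSup s) = sSup (sm x '' s)) :
    (∀ s : Set L, s ⊆ {x | sm x x = x} → sSup s ∈ {x | sm x x = x}) ∧
    (∀ x y, sm x x = x → sm y y = y → sm (sm x y) (sm x y) = sm x y) ∧
    (∀ x y, sm x x = x → sm y y = y →
      sm x y ≤ x ∧ sm x y ≤ y ∧
      ∀ z, sm z z = z → z ≤ x → z ≤ y → z ≤ sm x y) ∧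
    (∀ x, sm x x = x → ∀ s : Set L, s ⊆ {x | sm x x = x} →
      sm x (sSup s) = sSup (sm x '' s)) := by
  -- monotone in both variables
  have hmono2 : ∀ {a b c d : L}, a ≤ b → c ≤ d → sm a c ≤ sm b d := by
    intro a b c d hab hcd
    calc sm a c ≤ sm a d := hmono a hcd
      _ = sm d a := hcomm a d
      _ ≤ sm d b := hmono d hab
      _ = sm b d := hcomm d b
  have hle2 : ∀ x y : L, sm x y ≤ y := by
    intro x y
    calc sm x y ≤ sm ⊤ y := hmono2 le_top le_rfl
      _ = y := hunit y
  have hle1 : ∀ x y : L, sm x y ≤ x := by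
    intro x y; rw [hcomm]; exact hle2 y x
  refine ⟨?_, ?_, ?_, ?_⟩
  · intro s hs
    refine le_antisymm (hle2 _ _) ?_
    refine sSup_le fun a ha => ?_
    calc a = sm a a := (hs ha).symm
      _ ≤ sm (sSup s) (sSup s) := hmono2 (le_sSup ha) (le_sSup ha)
  · intro x y hx hy
    calc sm (sm x y) (sm x y) = sm x (sm y (sm x y)) := hassoc _ _ _
      _ = sm x (sm y (sm y x)) := by rw [hcomm x y]
      _ = sm x (sm (sm y y) x) := by rw [hassoc]
      _ = sm x (sm y x) := by rw [hy]
      _ = sm x (sm x y) := by rw [hcomm y x]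
      _ = sm (sm x x) y := (hassoc _ _ _).symm
      _ = sm x y := by rw [hx]
  · intro x y _ _
    refine ⟨hle1 x y, hle2 x y, fun z hz hzx hzy => ?_⟩
    calc z = sm z z := hz.symm
      _ ≤ sm x y := hmono2 hzx hzy
  · intro x _ s _
    exact hdist x s
end

section
/- In the setting where L is a complete lattice with commutative, associative operation ∧ distributing over arbitrary joins (with unit ⊤), DL = { x | x ∧ x = x }, and r : L → DL is the right adjoint of the inclusion given by r x = sup { y ∈ DL | y ≤ x }, the map r preserves the operation ∧: r(x ∧ y) = r x ∧ r y. -/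
/-- The retraction `r` onto the smash-idempotents preserves the smash
product: `r (x ∧ y) = r x ∧ r y`. -/
theorem stmt_7 {L : Type*} [CompleteLattice L] (sm : L → L → L)
    (hcomm : ∀ x y, sm x y = sm y x)
    (hassoc : ∀ x y z, sm (sm x y) z = sm x (sm y z))
    (hmono : ∀ x, Monotone (sm x))
    (hunit : ∀ x, sm ⊤ x = x)
    (hdist : ∀ x (s : Set L), sm x (sSup s) = sSup (sm x '' s))
    (r : L → L)
    (hr : ∀ x, r x = sSup {y | sm y y = y ∧ y ≤ x}) :
    ∀ x y, r (sm x y) = sm (r x) (r y) := by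
  have mono1 : ∀ c a b : L, a ≤ b → sm a c ≤ sm b c := fun c a b h => by
    rw [hcomm a c, hcomm b c]; exact hmono c h
  have le_right : ∀ a b : L, sm a b ≤ b := fun a b => by
    calc sm a b ≤ sm ⊤ b := mono1 b a ⊤ le_top
    _ = b := hunit b
  have le_left : ∀ a b : L, sm a b ≤ a := fun a b => by rw [hcomm]; exact le_right b a
  have ex : ∀ a b c d : L, sm (sm a b) (sm c d) = sm (sm a c) (sm b d) := by
    intro a b c d
    rw [hassoc, ← hassoc b c d, hcomm b c, hassoc c b d, ← hassoc]
  have idem_sm : ∀ a b : L, sm a a = a → sm b b = b → sm (sm a b) (sm a b) = sm a b := by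
    intro a b ha hb; rw [ex, ha, hb]
  have dle : ∀ z d : L, sm d d = d → d ≤ z → d ≤ r z := fun z d h1 h2 => by
    rw [hr]; exact le_sSup ⟨h1, h2⟩
  have ridem : ∀ z, sm (r z) (r z) = r z := by
    intro z
    apply le_antisymm
    · rw [hr z, hdist]
      apply sSup_le
      rintro _ ⟨b, hb, rfl⟩
      rw [hcomm, hdist]
      apply sSup_le
      rintro _ ⟨a, ha, rfl⟩
      exact le_sSup ⟨idem_sm b a hb.1 ha.1, (le_right b a).trans ha.2⟩
    · rw [hr z]
      apply sSup_le
      intro a ha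
      calc a = sm a a := ha.1.symm
      _ ≤ sm a (sSup {y | sm y y = y ∧ y ≤ z}) := hmono a (le_sSup ha)
      _ ≤ _ := mono1 _ a _ (le_sSup ha)
  intro x y
  apply le_antisymm
  · rw [hr (sm x y)]
    apply sSup_le
    rintro d ⟨hd1, hd2⟩
    have hdx : d ≤ r x := dle x d hd1 (hd2.trans (le_left x y))
    have hdy : d ≤ r y := dle y d hd1 (hd2.trans (le_right x y))
    calc d = sm d d := hd1.symm
    _ ≤ sm d (r y) := hmono d hdy
    _ ≤ sm (r x) (r y) := mono1 (r y) d (r x) hdx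
  · apply dle
    · exact idem_sm _ _ (ridem x) (ridem y)
    · calc sm (r x) (r y) ≤ sm (r x) y := hmono (r x) ((hr y ▸ sSup_le fun d hd => hd.2))
      _ ≤ sm x y := mono1 y (r x) x (hr x ▸ sSup_le fun d hd => hd.2)
end

section
/- In a complete lattice L with operation ∧ as above and complementation a with a(a x) = x, suppose x and y are complemented (x ∨ a x = ⊤ and y ∨ a y = ⊤). Then: (i) for any e, e = (e ∧ x) ∨ (e ∧ a x); (ii) e ≤ x if and only if e = e ∧ x; (iii) the lattice meet of x and y equals x ∧ y; (iv) x ∧ y is complemented with a(x ∧ y) = a x ∨ a y; (v) x ∨ y is complemented with a(x ∨ y) = a x ∧ a y. -/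
/-- Basic properties of complemented elements in the Bousfield lattice. -/
theorem stmt_11 {L : Type*} [CompleteLattice L] (sm : L → L → L)
    (hcomm : ∀ x y, sm x y = sm y x)
    (hassoc : ∀ x y z, sm (sm x y) z = sm x (sm y z))
    (hmono : ∀ x, Monotone (sm x))
    (hunit : ∀ x, sm ⊤ x = x)
    (hdist : ∀ x (s : Set L), sm x (sSup s) = sSup (sm x '' s))
    (a : L → L) (ha : ∀ x, a x = sSup {y | sm x y = ⊥})
    (hinv : ∀ x, a (a x) = x)
    (x y : L) (hx : x ⊔ a x = ⊤) (hy : y ⊔ a y = ⊤) :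
    (∀ e, e = sm e x ⊔ sm e (a x)) ∧
    (∀ e, e ≤ x ↔ e = sm e x) ∧
    (x ⊓ y = sm x y) ∧
    (sm x y ⊔ a (sm x y) = ⊤ ∧ a (sm x y) = a x ⊔ a y) ∧
    ((x ⊔ y) ⊔ a (x ⊔ y) = ⊤ ∧ a (x ⊔ y) = sm (a x) (a y)) := by
  -- basic facts
  have htop : ∀ e, sm e ⊤ = e := fun e => by rw [hcomm, hunit]
  have hsup : ∀ e u v, sm e (u ⊔ v) = sm e u ⊔ sm e v := by
    intro e u v
    have := hdist e {u, v}
    rwa [sSup_pair, Set.image_pair, sSup_pair] at this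
  have hler : ∀ u v, sm u v ≤ v := fun u v => by
    calc sm u v = sm v u := hcomm u v
    _ ≤ sm v ⊤ := hmono v le_top
    _ = v := htop v
  have hlel : ∀ u v, sm u v ≤ u := fun u v => hcomm u v ▸ hler v u
  have hbot : ∀ z, sm z ⊥ = ⊥ := fun z => le_bot_iff.mp (hler z ⊥)
  have hax : ∀ z, sm z (a z) = ⊥ := by
    intro z
    rw [ha, hdist]
    apply le_bot_iff.mp
    apply sSup_le
    rintro _ ⟨w, hw, rfl⟩
    exact le_of_eq hw
  have hle_a : ∀ z w, sm z w = ⊥ → w ≤ a z := fun z w h => by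
    rw [ha]; exact le_sSup h
  -- (i) splitting, for any complemented u
  have split : ∀ u, u ⊔ a u = ⊤ → ∀ e, e = sm e u ⊔ sm e (a u) := by
    intro u hu e
    calc e = sm e ⊤ := (htop e).symm
    _ = sm e (u ⊔ a u) := by rw [hu]
    _ = sm e u ⊔ sm e (a u) := hsup e u (a u)
  -- (ii), for any complemented u
  have absorb : ∀ u, u ⊔ a u = ⊤ → ∀ e, e ≤ x → True := fun _ _ _ _ => trivial
  have part2 : ∀ u, u ⊔ a u = ⊤ → ∀ e, e ≤ u ↔ e = sm e u := by
    intro u hu e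
    constructor
    · intro he
      have h1 : sm e (a u) = ⊥ := by
        apply le_bot_iff.mp
        calc sm e (a u) = sm (a u) e := hcomm e (a u)
        _ ≤ sm (a u) u := hmono (a u) he
        _ = sm u (a u) := hcomm (a u) u
        _ = ⊥ := hax u
      calc e = sm e u ⊔ sm e (a u) := split u hu e
      _ = sm e u := by rw [h1, sup_bot_eq]
    · intro he
      rw [he]; exact hler e u
  -- complement of a complemented element is complemented
  have hax' : a x ⊔ a (a x) = ⊤ := by rw [hinv, sup_comm]; exact hx
  have hay' : a y ⊔ a (a y) = ⊤ := by rw [hinv, sup_comm]; exact hy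
  refine ⟨split x hx, part2 x hx, ?_, ⟨?_, ?_⟩, ⟨?_, ?_⟩⟩
  · -- (iii)
    apply le_antisymm
    · have h1 : x ⊓ y = sm (x ⊓ y) x := (part2 x hx _).mp inf_le_left
      have h2 : x ⊓ y = sm (x ⊓ y) y := (part2 y hy _).mp inf_le_right
      calc x ⊓ y = sm (sm (x ⊓ y) x) y := by rw [← h1, ← h2]
      _ = sm (x ⊓ y) (sm x y) := hassoc _ _ _
      _ ≤ sm x y := hler _ _
    · exact le_inf (hlel x y) (hler x y)
  · -- (iv) complemented
    have hsub : a (sm x y) = a x ⊔ a y := by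
      apply le_antisymm
      · -- a (sm x y) ≤ a x ⊔ a y
        set c := a (sm x y) with hc
        have hczero : sm (sm x y) c = ⊥ := hax (sm x y)
        have e1 : c = sm c x ⊔ sm c (a x) := split x hx c
        have e2 : sm c x = sm (sm c x) y ⊔ sm (sm c x) (a y) := split y hy (sm c x)
        have e3 : sm (sm c x) y = ⊥ := by
          calc sm (sm c x) y = sm c (sm x y) := hassoc c x y
          _ = sm (sm x y) c := hcomm _ _
          _ = ⊥ := hczero
        calc c = (sm (sm c x) y ⊔ sm (sm c x) (a y)) ⊔ sm c (a x) := by rw [← e2, ← e1]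
        _ = sm (sm c x) (a y) ⊔ sm c (a x) := by rw [e3, bot_sup_eq]
        _ ≤ a y ⊔ a x := sup_le_sup (hler _ _) (hler _ _)
        _ = a x ⊔ a y := sup_comm _ _
      · apply hle_a
        rw [hsup]
        have h1 : sm (sm x y) (a x) = ⊥ := by
          calc sm (sm x y) (a x) = sm (sm y x) (a x) := by rw [hcomm x y]
          _ = sm y (sm x (a x)) := hassoc y x (a x)
          _ = sm y ⊥ := by rw [hax x]
          _ = ⊥ := hbot y
        have h2 : sm (sm x y) (a y) = ⊥ := by
          calc sm (sm x y) (a y) = sm x (sm y (a y)) := hassoc x y (a y)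
          _ = sm x ⊥ := by rw [hax y]
          _ = ⊥ := hbot x
        rw [h1, h2, sup_bot_eq]
    rw [hsub]
    -- sm x y ⊔ (a x ⊔ a y) = ⊤
    apply top_le_iff.mp
    have hxle : x ≤ sm x y ⊔ a y := by
      calc x = sm x y ⊔ sm x (a y) := split y hy x
      _ ≤ sm x y ⊔ a y := sup_le_sup_left (hler _ _) _
    calc ⊤ = x ⊔ a x := hx.symm
    _ ≤ (sm x y ⊔ a y) ⊔ a x := sup_le_sup_right hxle _
    _ ≤ (sm x y ⊔ (a x ⊔ a y)) := by
        apply sup_le (sup_le le_sup_left ?_) ?_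
        · exact le_sup_of_le_right le_sup_right
        · exact le_sup_of_le_right le_sup_left
  · -- (iv) formula: proved above; redo
    apply le_antisymm
    · set c := a (sm x y) with hc
      have hczero : sm (sm x y) c = ⊥ := hax (sm x y)
      have e1 : c = sm c x ⊔ sm c (a x) := split x hx c
      have e2 : sm c x = sm (sm c x) y ⊔ sm (sm c x) (a y) := split y hy (sm c x)
      have e3 : sm (sm c x) y = ⊥ := by
        calc sm (sm c x) y = sm c (sm x y) := hassoc c x y
        _ = sm (sm x y) c := hcomm _ _
        _ = ⊥ := hczero
      calc c = (sm (sm c x) y ⊔ sm (sm c x) (a y)) ⊔ sm c (a x) := by rw [← e2, ← e1]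
      _ = sm (sm c x) (a y) ⊔ sm c (a x) := by rw [e3, bot_sup_eq]
      _ ≤ a y ⊔ a x := sup_le_sup (hler _ _) (hler _ _)
      _ = a x ⊔ a y := sup_comm _ _
    · apply hle_a
      rw [hsup]
      have h1 : sm (sm x y) (a x) = ⊥ := by
        calc sm (sm x y) (a x) = sm (sm y x) (a x) := by rw [hcomm x y]
        _ = sm y (sm x (a x)) := hassoc y x (a x)
        _ = sm y ⊥ := by rw [hax x]
        _ = ⊥ := hbot y
      have h2 : sm (sm x y) (a y) = ⊥ := by
        calc sm (sm x y) (a y) = sm x (sm y (a y)) := hassoc x y (a y)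
        _ = sm x ⊥ := by rw [hax y]
        _ = ⊥ := hbot x
      rw [h1, h2, sup_bot_eq]
  · -- (v) complemented
    have hform : a (x ⊔ y) = sm (a x) (a y) := by
      apply le_antisymm
      · set c := a (x ⊔ y) with hc
        have hczero : sm (x ⊔ y) c = ⊥ := hax (x ⊔ y)
        have hcx : sm x c = ⊥ := by
          apply le_bot_iff.mp
          calc sm x c = sm c x := hcomm x c
          _ ≤ sm c (x ⊔ y) := hmono c le_sup_left
          _ = sm (x ⊔ y) c := hcomm c _
          _ = ⊥ := hczero
        have hcy : sm y c = ⊥ := by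
          apply le_bot_iff.mp
          calc sm y c = sm c y := hcomm y c
          _ ≤ sm c (x ⊔ y) := hmono c le_sup_right
          _ = sm (x ⊔ y) c := hcomm c _
          _ = ⊥ := hczero
        have hcax : c ≤ a x := hle_a x c hcx
        have hcay : c ≤ a y := hle_a y c hcy
        have h1 : c = sm c (a x) := (part2 (a x) hax' c).mp hcax
        have h2 : c = sm c (a y) := (part2 (a y) hay' c).mp hcay
        calc c = sm (sm c (a x)) (a y) := by rw [← h1, ← h2]
        _ = sm c (sm (a x) (a y)) := hassoc _ _ _
        _ ≤ sm (a x) (a y) := hler _ _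
      · apply hle_a
        have h1 : sm x (sm (a x) (a y)) = ⊥ := by
          calc sm x (sm (a x) (a y)) = sm (sm x (a x)) (a y) := (hassoc _ _ _).symm
          _ = sm ⊥ (a y) := by rw [hax x]
          _ = sm (a y) ⊥ := hcomm _ _
          _ = ⊥ := hbot _
        have h2 : sm y (sm (a x) (a y)) = ⊥ := by
          calc sm y (sm (a x) (a y)) = sm y (sm (a y) (a x)) := by rw [hcomm (a x) (a y)]
          _ = sm (sm y (a y)) (a x) := (hassoc _ _ _).symm
          _ = sm ⊥ (a x) := by rw [hax y]
          _ = sm (a x) ⊥ := hcomm _ _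
          _ = ⊥ := hbot _
        calc sm (x ⊔ y) (sm (a x) (a y)) = sm (sm (a x) (a y)) (x ⊔ y) := hcomm _ _
        _ = sm (sm (a x) (a y)) x ⊔ sm (sm (a x) (a y)) y := hsup _ _ _
        _ = sm x (sm (a x) (a y)) ⊔ sm y (sm (a x) (a y)) := by rw [hcomm _ x, hcomm _ y]
        _ = ⊥ := by rw [h1, h2, sup_bot_eq]
    rw [hform]
    apply top_le_iff.mp
    have haxle : a x ≤ y ⊔ sm (a x) (a y) := by
      calc a x = sm (a x) y ⊔ sm (a x) (a y) := split y hy (a x)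
      _ ≤ y ⊔ sm (a x) (a y) := sup_le_sup_right (hler _ _) _
    calc ⊤ = x ⊔ a x := hx.symm
    _ ≤ x ⊔ (y ⊔ sm (a x) (a y)) := sup_le_sup_left haxle _
    _ = (x ⊔ y) ⊔ sm (a x) (a y) := (sup_assoc _ _ _).symm
  · -- (v) formula
    apply le_antisymm
    · set c := a (x ⊔ y) with hc
      have hczero : sm (x ⊔ y) c = ⊥ := hax (x ⊔ y)
      have hcx : sm x c = ⊥ := by
        apply le_bot_iff.mp
        calc sm x c = sm c x := hcomm x c
        _ ≤ sm c (x ⊔ y) := hmono c le_sup_left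
        _ = sm (x ⊔ y) c := hcomm c _
        _ = ⊥ := hczero
      have hcy : sm y c = ⊥ := by
        apply le_bot_iff.mp
        calc sm y c = sm c y := hcomm y c
        _ ≤ sm c (x ⊔ y) := hmono c le_sup_right
        _ = sm (x ⊔ y) c := hcomm c _
        _ = ⊥ := hczero
      have h1 : c = sm c (a x) := (part2 (a x) hax' c).mp (hle_a x c hcx)
      have h2 : c = sm c (a y) := (part2 (a y) hay' c).mp (hle_a y c hcy)
      calc c = sm (sm c (a x)) (a y) := by rw [← h1, ← h2]
      _ = sm c (sm (a x) (a y)) := hassoc _ _ _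
      _ ≤ sm (a x) (a y) := hler _ _
    · apply hle_a
      have h1 : sm x (sm (a x) (a y)) = ⊥ := by
        calc sm x (sm (a x) (a y)) = sm (sm x (a x)) (a y) := (hassoc _ _ _).symm
        _ = sm ⊥ (a y) := by rw [hax x]
        _ = sm (a y) ⊥ := hcomm _ _
        _ = ⊥ := hbot _
      have h2 : sm y (sm (a x) (a y)) = ⊥ := by
        calc sm y (sm (a x) (a y)) = sm y (sm (a y) (a x)) := by rw [hcomm (a x) (a y)]
        _ = sm (sm y (a y)) (a x) := (hassoc _ _ _).symm
        _ = sm ⊥ (a x) := by rw [hax y]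
        _ = sm (a x) ⊥ := hcomm _ _
        _ = ⊥ := hbot _
      calc sm (x ⊔ y) (sm (a x) (a y)) = sm (sm (a x) (a y)) (x ⊔ y) := hcomm _ _
      _ = sm (sm (a x) (a y)) x ⊔ sm (sm (a x) (a y)) y := hsup _ _ _
      _ = sm x (sm (a x) (a y)) ⊔ sm y (sm (a x) (a y)) := by rw [hcomm _ x, hcomm _ y]
      _ = ⊥ := by rw [h1, h2, sup_bot_eq]
end

section
/- In a complete lattice with operation ∧ and complementation a as above (a(ax)=x), the set BA of complemented elements is a Boolean algebra: it is closed under ∧ (which is its meet), ∨, and a, it is distributive, and every element has a complement. -/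
/-- The set `BA` of complemented elements is a Boolean algebra: it is closed
under smash (its meet), join, and complementation; smash distributes over
join; and every element has a complement. -/
theorem stmt_12 {L : Type*} [CompleteLattice L] (sm : L → L → L)
    (hcomm : ∀ x y, sm x y = sm y x)
    (hassoc : ∀ x y z, sm (sm x y) z = sm x (sm y z))
    (hmono : ∀ x, Monotone (sm x))
    (hunit : ∀ x, sm ⊤ x = x)
    (hdist : ∀ x (s : Set L), sm x (sSup s) = sSup (sm x '' s))
    (a : L → L) (ha : ∀ x, a x = sSup {y | sm x y = ⊥})
    (hinv : ∀ x, a (a x) = x) :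
    (∀ x y, x ⊔ a x = ⊤ → y ⊔ a y = ⊤ → sm x y ⊔ a (sm x y) = ⊤) ∧
    (∀ x y, x ⊔ a x = ⊤ → y ⊔ a y = ⊤ → (x ⊔ y) ⊔ a (x ⊔ y) = ⊤) ∧
    (∀ x, x ⊔ a x = ⊤ → a x ⊔ a (a x) = ⊤) ∧
    (∀ x y, x ⊔ a x = ⊤ → y ⊔ a y = ⊤ →
      sm x y ≤ x ∧ sm x y ≤ y ∧
      ∀ z, z ⊔ a z = ⊤ → z ≤ x → z ≤ y → z ≤ sm x y) ∧
    (∀ x y z, sm x (y ⊔ z) = sm x y ⊔ sm x z) ∧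
    (∀ x, x ⊔ a x = ⊤ → sm x (a x) = ⊥) := by
  -- monotone in the first argument
  have hmono' : ∀ y ⦃x1 x2 : L⦄, x1 ≤ x2 → sm x1 y ≤ sm x2 y := by
    intro y x1 x2 h
    rw [hcomm x1 y, hcomm x2 y]
    exact hmono y h
  have hbot : ∀ x, sm x ⊥ = ⊥ := by
    intro x
    have h := hdist x ∅
    simpa using h
  have hbot' : ∀ x, sm ⊥ x = ⊥ := by
    intro x; rw [hcomm]; exact hbot x
  have hsup2 : ∀ x y z, sm x (y ⊔ z) = sm x y ⊔ sm x z := by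
    intro x y z
    have h := hdist x {y, z}
    simpa [Set.image_pair] using h
  have hsup2' : ∀ x y z, sm (x ⊔ y) z = sm x z ⊔ sm y z := by
    intro x y z
    rw [hcomm, hsup2, hcomm z x, hcomm z y]
  have hax : ∀ x, sm x (a x) = ⊥ := by
    intro x
    rw [ha x, hdist]
    apply sSup_eq_bot.2
    rintro y ⟨z, hz, rfl⟩
    exact hz
  have hle2 : ∀ x y, sm x y ≤ y := by
    intro x y
    calc sm x y ≤ sm ⊤ y := hmono' y le_top
    _ = y := hunit y
  have hle1 : ∀ x y, sm x y ≤ x := by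
    intro x y; rw [hcomm]; exact hle2 y x
  have hmem : ∀ x y, sm x y = ⊥ → y ≤ a x := by
    intro x y h; rw [ha]; exact le_sSup h
  -- idempotence on complemented elements
  have hidem : ∀ x, x ⊔ a x = ⊤ → sm x x = x := by
    intro x hx
    have h : sm x (x ⊔ a x) = x := by
      rw [hx, hcomm]; exact hunit x
    rw [hsup2, hax, sup_bot_eq] at h
    exact h
  -- decomposition of ⊤
  have htop : ∀ x y, x ⊔ a x = ⊤ → y ⊔ a y = ⊤ →
      sm x y ⊔ sm x (a y) ⊔ (sm (a x) y ⊔ sm (a x) (a y)) = ⊤ := by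
    intro x y hx hy
    have h : sm (x ⊔ a x) (y ⊔ a y) = ⊤ := by rw [hx, hy, hunit]
    rw [hsup2', hsup2, hsup2] at h
    exact h
  refine ⟨?_, ?_, ?_, ?_, hsup2, fun x _ => hax x⟩
  · -- closed under sm
    intro x y hx hy
    have h1 : a x ≤ a (sm x y) := by
      apply hmem
      rw [hcomm x y, hassoc, hax, hbot]
    have h2 : a y ≤ a (sm x y) := by
      apply hmem
      rw [hassoc, hax, hbot]
    rw [eq_top_iff, ← htop x y hx hy]
    apply sup_le
    · apply sup_le le_sup_left
      exact le_trans (le_trans (hle2 x (a y)) h2) le_sup_right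
    · apply sup_le
      · exact le_trans (le_trans (hle1 (a x) y) h1) le_sup_right
      · exact le_trans (le_trans (hle1 (a x) (a y)) h1) le_sup_right
  · -- closed under ⊔
    intro x y hx hy
    have h1 : sm (a x) (a y) ≤ a (x ⊔ y) := by
      apply hmem
      rw [hsup2', ← hassoc, hax x, hbot']
      rw [hcomm (a x) (a y), ← hassoc, hax y, hbot', sup_bot_eq]
    rw [eq_top_iff, ← htop x y hx hy]
    apply sup_le
    · apply sup_le
      · exact le_trans (hle1 x y) (le_trans le_sup_left le_sup_left)
      · exact le_trans (hle1 x (a y)) (le_trans le_sup_left le_sup_left)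
    · apply sup_le
      · exact le_trans (hle2 (a x) y) (le_trans le_sup_right le_sup_left)
      · exact le_trans h1 le_sup_right
  · -- closed under a
    intro x hx
    rw [hinv, sup_comm]
    exact hx
  · -- sm is the meet on BA
    intro x y hx hy
    refine ⟨hle1 x y, hle2 x y, ?_⟩
    intro z hz hzx hzy
    calc z = sm z z := (hidem z hz).symm
    _ ≤ sm x y := le_trans (hmono' z hzx) (hmono x hzy)
end

section
/- Let F be a frame with pseudocomplement A. Call x closed if A(A x) = x, and let cBA be the set of closed elements. Then cBA is closed under arbitrary meets of F; the join in cBA of a family {x_i} is A²(sup_i x_i); every element of cBA is complemented in cBA (with complement A x); hence cBA is a complete Boolean algebra. Moreover A² : F → cBA is left adjoint to the inclusion cBA → F. -/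
/-- The closed elements `cBA = {x | A (A x) = x}` of a frame form a complete
Boolean algebra: closed under arbitrary meets, with join `A² (sSup s)`,
every element complemented by `A x`; and `A²` is left adjoint to the
inclusion. -/
theorem stmt_14 {F : Type*} [Order.Frame F]
    (A : F → F) (hA : ∀ x, A x = sSup {y | y ⊓ x = ⊥}) :
    (∀ s : Set F, s ⊆ {x | A (A x) = x} → sInf s ∈ {x | A (A x) = x}) ∧
    (∀ s : Set F, s ⊆ {x | A (A x) = x} →
      A (A (sSup s)) ∈ {x | A (A x) = x} ∧
      (∀ x ∈ s, x ≤ A (A (sSup s))) ∧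
      (∀ z ∈ {x | A (A x) = x}, (∀ x ∈ s, x ≤ z) → A (A (sSup s)) ≤ z)) ∧
    (∀ x, A (A x) = x →
      A (A (A x)) = A x ∧ x ⊓ A x = ⊥ ∧ A (A (x ⊔ A x)) = ⊤) ∧
    (∀ x : F, ∀ y, A (A y) = y → (A (A x) ≤ y ↔ x ≤ y)) := by
  have hc : ∀ x : F, A x = xᶜ := by
    intro x
    rw [hA]
    apply le_antisymm
    · exact sSup_le fun y hy =>
        le_compl_iff_disjoint_right.mpr (disjoint_iff.mpr hy)
    · exact le_sSup (show xᶜ ⊓ x = ⊥ from disjoint_iff.mp disjoint_compl_left)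
  simp only [hc, Set.mem_setOf_eq]
  refine ⟨?_, ?_, ?_, ?_⟩
  · intro s hs
    apply le_antisymm
    · exact le_sInf fun x hx => (hs hx) ▸ compl_le_compl
        (compl_le_compl (sInf_le hx))
    · exact le_compl_compl
  · intro s hs
    refine ⟨by simp [compl_compl_compl], fun x hx => le_trans (le_sSup hx)
      le_compl_compl, fun z hz hub => ?_⟩
    calc (sSup s)ᶜᶜ ≤ zᶜᶜ := compl_le_compl (compl_le_compl (sSup_le hub))
    _ = z := hz
  · intro x hx
    refine ⟨compl_compl_compl x, inf_compl_self x, ?_⟩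
    rw [compl_sup, hx, inf_comm, inf_compl_self, compl_bot]
  · intro x y hy
    constructor
    · exact fun h => le_trans le_compl_compl h
    · intro h
      calc xᶜᶜ ≤ yᶜᶜ := compl_le_compl (compl_le_compl h)
      _ = y := hy
end

section
/- (Glivenko) Let F be a frame with pseudocomplement A. Call z dense if A(A z) = ⊤ (equivalently A z = ⊥). Then for x, y ∈ F, A²x = A²y if and only if there exists a dense element z with x ⊓ z = y ⊓ z. -/
private lemma glivenko_A_eq_compl {F : Type*} [Order.Frame F]
    (A : F → F) (hA : ∀ x, A x = sSup {y | y ⊓ x = ⊥}) (x : F) : A x = xᶜ := by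
  rw [hA]
  apply le_antisymm
  · exact sSup_le fun y hy => by
      rw [le_compl_iff_disjoint_right, disjoint_iff]; exact hy
  · exact le_sSup (by simp [Set.mem_setOf_eq, compl_inf_self x])

private lemma glivenko_dense_inf {F : Type*} [Order.Frame F] {a b : F}
    (ha : aᶜ = ⊥) (hb : bᶜ = ⊥) : (a ⊓ b)ᶜ = ⊥ := by
  have h1 : (a ⊓ b)ᶜ ⊓ a ≤ bᶜ := by
    rw [le_compl_iff_disjoint_right, disjoint_iff, inf_assoc, compl_inf_self]
  have h2 : (a ⊓ b)ᶜ ≤ aᶜ := by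
    rw [le_compl_iff_disjoint_right, disjoint_iff]
    exact le_bot_iff.mp (h1.trans_eq hb)
  exact le_bot_iff.mp (h2.trans_eq ha)

/-- (Glivenko) In a frame, `A²x = A²y` iff there is a dense `z` with
`x ⊓ z = y ⊓ z`. -/
theorem stmt_16 {F : Type*} [Order.Frame F]
    (A : F → F) (hA : ∀ x, A x = sSup {y | y ⊓ x = ⊥}) :
    ∀ x y : F,
      A (A x) = A (A y) ↔ ∃ z, A (A z) = ⊤ ∧ x ⊓ z = y ⊓ z := by
  have hAc := glivenko_A_eq_compl A hA
  intro x y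
  simp only [hAc]
  constructor
  · intro h
    refine ⟨(x ⊔ yᶜ) ⊓ (xᶜ ⊔ y), ?_, ?_⟩
    · have ha : (x ⊔ yᶜ)ᶜ = ⊥ := by rw [compl_sup, ← h, inf_compl_self]
      have hb : (xᶜ ⊔ y)ᶜ = ⊥ := by rw [compl_sup, h, compl_inf_self]
      rw [glivenko_dense_inf ha hb, compl_bot]
    · have hx : x ⊓ ((x ⊔ yᶜ) ⊓ (xᶜ ⊔ y)) = x ⊓ y := by
        rw [← inf_assoc, inf_sup_self, inf_sup_left, inf_compl_self, bot_sup_eq]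
      have hy : y ⊓ ((x ⊔ yᶜ) ⊓ (xᶜ ⊔ y)) = x ⊓ y := by
        rw [inf_comm (x ⊔ yᶜ) (xᶜ ⊔ y), ← inf_assoc,
          inf_eq_left.mpr (le_sup_right : y ≤ xᶜ ⊔ y), inf_sup_left,
          inf_compl_self, sup_bot_eq, inf_comm y x]
      rw [hx, hy]
  · rintro ⟨z, hz, hxz⟩
    have hz' : zᶜ = ⊥ := by
      have : ⊤ ≤ zᶜᶜ := hz.ge
      rw [le_compl_iff_disjoint_right, disjoint_iff, top_inf_eq] at this
      exact this
    have key : ∀ w : F, wᶜ = (w ⊓ z)ᶜ := by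
      intro w
      apply le_antisymm (compl_anti inf_le_left)
      rw [le_compl_iff_disjoint_right, disjoint_iff]
      have : (w ⊓ z)ᶜ ⊓ w ≤ zᶜ := by
        rw [le_compl_iff_disjoint_right, disjoint_iff, inf_assoc, compl_inf_self]
      rw [le_bot_iff.mp (this.trans_eq hz')]
    rw [key x, key y, hxz]
end
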